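/- Under the hypotheses of the main theorem ($\Pro(g(i)=j)=1/N$, $\Pro(g(i_1)=j_1,g(i_2)=j_2)\le C_G/N^2$ for distinct pairs), let $a$ be a non-negative $n\times N$ matrix supported on the positions $h(1),\dots,h(\ell N)$ with $a(h(1))\ge\dots\ge a(h(\ell N))$, and let $\widetilde a$ be the matrix with $\widetilde a(h(j)) = \frac{1}{\ell N}\sum_{i=1}^{\ell N} a(h(i))$ for $j\le \ell N$ and $0$ otherwise. Then $\E S(\widetilde a) \le (8+16C_G)\,\E S(a)$, where $S(b)(g) = \sum_{k=1}^{\ell}\kmax_{1\le i\le n} b_{ig(i)}$. -/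

import Mathlib

/-!
Let `e₀ ≥ e₁ ≥ ⋯` be the entries of `a` read along `h`. Every entry of `ã` is at most the
average `T / (ℓN)`, `T = ∑ eᵣ`, so `E S(ã) ≤ T / N`, and it suffices to bound `T / N` by `E S(a)`.

Cut the sequence into blocks of length `2N`. A random `g` hits on average `2s` of the first
`2sN` positions, always in distinct rows, and by the second moment bound (Paley–Zygmund) it
hits at least `s` of them with probability at least `1 / (2 + 4C)`; then its `s`-th largest
entry is at least `e_{2sN-1}`, which dominates every term of the next block. For the first
block take `j₀ ≈ N / (2C)`: by Bonferroni, the first hit of `g` among the first `j₀` positions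
is at position `j` with probability at least `1 / (2N)`, so `E kmax₁ ≥ (e₀ + ⋯ + e_{j₀-1}) / (2N)`,
and by monotonicity the first block sums to at most `2N / j₀ ≤ 4C` times `e₀ + ⋯ + e_{j₀-1}`.
Altogether `T / N ≤ 8C E kmax₁ + (4 + 8C) E S(a) ≤ (4 + 16C) E S(a)`.
-/

/-- `kmax x k` is the `k`-th largest entry (1-indexed) of the vector `x`. -/
noncomputable def kmax {n : ℕ} (x : Fin n → ℝ) (k : ℕ) : ℝ :=
  ((List.ofFn x).mergeSort (fun a b => decide (b ≤ a))).getD (k - 1) 0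

open Finset

theorem List.le_getD_of_pairwise_ge {l : List ℝ} (hl : l.Pairwise (· ≥ ·)) {b : ℝ} {k : ℕ}
    (hk : 1 ≤ k) (hcount : k ≤ l.countP (fun y => decide (b ≤ y))) : b ≤ l.getD (k - 1) 0 := by
  induction l generalizing k with
  | nil => simp at hcount; omega
  | cons x xs ih =>
    rw [List.pairwise_cons] at hl
    obtain ⟨k, rfl⟩ : ∃ k', k = k' + 1 := ⟨k - 1, by omega⟩
    rcases k with _ | k
    · obtain ⟨y, hy, hby⟩ := List.countP_pos_iff.mp (Nat.lt_of_lt_of_le Nat.zero_lt_one hcount)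
      simp only [decide_eq_true_eq] at hby
      rcases List.mem_cons.mp hy with rfl | hy
      · simpa using hby
      · simpa using hby.trans (hl.1 y hy)
    · rw [List.countP_cons] at hcount
      simpa using ih hl.2 (k := k + 1) (by omega) (by split at hcount <;> omega)

theorem kmax_eq_zero_or_exists {n : ℕ} (x : Fin n → ℝ) (k : ℕ) :
    kmax x k = 0 ∨ ∃ i, kmax x k = x i := by
  unfold kmax
  set l := (List.ofFn x).mergeSort (fun a b => decide (b ≤ a))
  rcases lt_or_ge (k - 1) l.length with hlt | hge
  · right
    rw [List.getD_eq_getElem l 0 hlt]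
    obtain ⟨i, hi⟩ := List.mem_ofFn.mp ((List.mergeSort_perm _ _).subset (List.getElem_mem hlt))
    exact ⟨i, hi.symm⟩
  · exact Or.inl (List.getD_eq_default l 0 hge)

theorem kmax_nonneg {n : ℕ} {x : Fin n → ℝ} (hx : ∀ i, 0 ≤ x i) (k : ℕ) : 0 ≤ kmax x k := by
  rcases kmax_eq_zero_or_exists x k with h | ⟨i, h⟩ <;> rw [h]
  exact hx i

theorem kmax_le {n : ℕ} {x : Fin n → ℝ} {B : ℝ} (hB : 0 ≤ B) (hx : ∀ i, x i ≤ B) (k : ℕ) :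
    kmax x k ≤ B := by
  rcases kmax_eq_zero_or_exists x k with h | ⟨i, h⟩ <;> rw [h]
  exacts [hB, hx i]

theorem le_kmax {n : ℕ} {x : Fin n → ℝ} {b : ℝ} {k : ℕ} (hk : 1 ≤ k) {s : Finset (Fin n)}
    (hs : k ≤ #s) (hb : ∀ i ∈ s, b ≤ x i) : b ≤ kmax x k := by
  refine List.le_getD_of_pairwise_ge ?_ hk ?_
  · refine (List.pairwise_mergeSort (fun a b c hab hbc => ?_) (fun a b => ?_) _).imp ?_
    · simp only [decide_eq_true_eq] at *; linarith
    · simpa using le_total b a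
    · simp
  · rw [(List.mergeSort_perm _ _).countP_eq, ← Multiset.coe_countP, ← Fin.univ_val_map,
      Multiset.countP_map]
    exact hs.trans (card_le_card fun i hi => mem_filter.mpr ⟨mem_univ i, hb i hi⟩)

theorem paley_zygmund_card_filter {γ : Type*} (G : Finset γ) (X : γ → ℝ) {μ σ t : ℝ}
    (hσ : 0 < σ) (ht : 0 ≤ t) (htμ : t ≤ μ) (h1 : μ * #G ≤ ∑ g ∈ G, X g)
    (h2 : ∑ g ∈ G, X g ^ 2 ≤ σ * #G) :
    (μ - t) ^ 2 / σ * #G ≤ #{g ∈ G | t ≤ X g} := by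
  set F := {g ∈ G | t ≤ X g}
  have hlow : (μ - t) * #G ≤ ∑ g ∈ F, X g := by
    have hrest : ∑ g ∈ G with ¬ t ≤ X g, X g ≤ t * #G :=
      calc ∑ g ∈ G with ¬ t ≤ X g, X g ≤ ∑ g ∈ G with ¬ t ≤ X g, t :=
            sum_le_sum fun g hg => (not_le.mp (mem_filter.mp hg).2).le
        _ ≤ t * #G := by
            rw [sum_const, nsmul_eq_mul, mul_comm]
            exact mul_le_mul_of_nonneg_left (by exact_mod_cast card_filter_le _ _) ht
    linarith [sum_filter_add_sum_filter_not G (fun g => t ≤ X g) X]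
  have hCS : (∑ g ∈ F, X g) ^ 2 ≤ #F * (σ * #G) :=
    sq_sum_le_card_mul_sum_sq.trans <| mul_le_mul_of_nonneg_left
      ((sum_le_sum_of_subset_of_nonneg (filter_subset _ _) fun _ _ _ => sq_nonneg _).trans h2)
      (Nat.cast_nonneg _)
  have hsq : ((μ - t) * #G) ^ 2 ≤ #F * (σ * #G) :=
    (pow_le_pow_left₀ (mul_nonneg (by linarith) (Nat.cast_nonneg _)) hlow 2).trans hCS
  rcases (Nat.cast_nonneg (α := ℝ) #G).eq_or_lt with hG | hG
  · rw [← hG, mul_zero]; positivity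
  · rw [div_mul_eq_mul_div, div_le_iff₀ hσ]
    nlinarith

theorem sum_card_filter_sq_le {γ ι : Type*} [DecidableEq ι] (G : Finset γ) (J : Finset ι)
    (E : ι → γ → Prop) [DecidableRel E] {p q : ℝ} (hq : 0 ≤ q)
    (hp : ∀ i ∈ J, #{g ∈ G | E i g} ≤ p)
    (hpq : ∀ i ∈ J, ∀ i' ∈ J, i ≠ i' → #{g ∈ G | E i g ∧ E i' g} ≤ q) :
    ∑ g ∈ G, (#{i ∈ J | E i g} : ℝ) ^ 2 ≤ #J * p + #J ^ 2 * q := by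
  have hsq : ∀ g, (#{i ∈ J | E i g} : ℝ) ^ 2
      = ∑ i ∈ J, ∑ i' ∈ J, if E i g ∧ E i' g then 1 else 0 := by
    intro g
    simp only [natCast_card_filter, sq, sum_mul_sum, ite_zero_mul_ite_zero, one_mul]
  have hrow : ∀ i ∈ J, ∑ i' ∈ J, (#{g ∈ G | E i g ∧ E i' g} : ℝ) ≤ p + #J * q := by
    intro i hi
    rw [← add_sum_erase J _ hi]
    simp only [and_self]
    gcongr
    · exact hp i hi
    · calc ∑ i' ∈ J.erase i, (#{g ∈ G | E i g ∧ E i' g} : ℝ)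
          ≤ ∑ i' ∈ J.erase i, q := sum_le_sum fun i' hi' =>
            hpq i hi i' (mem_of_mem_erase hi') (ne_of_mem_erase hi').symm
        _ ≤ #J * q := by
            rw [sum_const, nsmul_eq_mul]
            exact mul_le_mul_of_nonneg_right (by exact_mod_cast card_erase_le) hq
  calc ∑ g ∈ G, (#{i ∈ J | E i g} : ℝ) ^ 2
      = ∑ i ∈ J, ∑ i' ∈ J, (#{g ∈ G | E i g ∧ E i' g} : ℝ) := by
        rw [sum_congr rfl fun g _ => hsq g, sum_comm]
        refine sum_congr rfl fun i _ => ?_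
        rw [sum_comm]
        simp only [natCast_card_filter]
    _ ≤ ∑ i ∈ J, (p + #J * q) := sum_le_sum hrow
    _ = #J * p + #J ^ 2 * q := by rw [sum_const, nsmul_eq_mul]; ring

section FirstHit

variable {γ ι : Type*} [LinearOrder ι]

theorem sum_mul_ite_sub_sum_ite_le (J : Finset ι) (P : ι → Prop) [DecidablePred P] (w : ι → ℝ)
    {B : ℝ} (hw : ∀ i ∈ J, 0 ≤ w i) (hB : 0 ≤ B) (hwB : ∀ i ∈ J, P i → w i ≤ B) :
    ∑ i ∈ J, w i * ((if P i then 1 else 0) - ∑ i' ∈ J with i' < i, if P i ∧ P i' then 1 else 0)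
      ≤ B := by
  by_cases hS : {i ∈ J | P i}.Nonempty
  swap
  · rw [not_nonempty_iff_eq_empty, filter_eq_empty_iff] at hS
    refine (sum_eq_zero fun i hi => ?_).le.trans hB
    simp [hS hi]
  -- only the first index `m` with `P m` contributes a positive term
  set m := {i ∈ J | P i}.min' hS
  obtain ⟨hmJ, hPm⟩ := mem_filter.mp (min'_mem _ hS)
  have hterm : ∀ i ∈ J, w i * ((if P i then 1 else 0)
      - ∑ i' ∈ J with i' < i, if P i ∧ P i' then 1 else 0) ≤ if i = m then w i else 0 := by
    intro i hi
    have hsum0 : 0 ≤ ∑ i' ∈ J with i' < i, (if P i ∧ P i' then 1 else 0 : ℝ) :=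
      sum_nonneg fun _ _ => by split_ifs <;> norm_num
    split_ifs with hPi him him
    · nlinarith [hw i hi]
    · have hmi : m < i := lt_of_le_of_ne (min'_le _ _ (mem_filter.mpr ⟨hi, hPi⟩)) (Ne.symm him)
      have : (1 : ℝ) ≤ ∑ i' ∈ J with i' < i, if P i ∧ P i' then 1 else 0 := by
        have := single_le_sum (s := {i' ∈ J | i' < i})
          (f := fun i' => if P i ∧ P i' then (1 : ℝ) else 0)
          (fun _ _ => by split_ifs <;> norm_num) (mem_filter.mpr ⟨hmJ, hmi⟩)
        rwa [if_pos ⟨hPi, hPm⟩] at this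
      nlinarith [hw i hi]
    · nlinarith [hw i hi]
    · nlinarith [hw i hi]
  calc _ ≤ ∑ i ∈ J, if i = m then w i else 0 := sum_le_sum hterm
    _ = w m := by rw [sum_ite_eq' J m w, if_pos hmJ]
    _ ≤ B := hwB m hmJ hPm

theorem sum_mul_sub_card_mul_le_sum (G : Finset γ) (J : Finset ι) (E : ι → γ → Prop)
    [DecidableRel E] (w : ι → ℝ) (f : γ → ℝ) {p q : ℝ} (hw : ∀ i ∈ J, 0 ≤ w i)
    (hf : ∀ g ∈ G, 0 ≤ f g) (hwf : ∀ i ∈ J, ∀ g ∈ G, E i g → w i ≤ f g)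
    (hp : ∀ i ∈ J, p ≤ #{g ∈ G | E i g})
    (hq : ∀ i ∈ J, ∀ i' ∈ J, i' < i → #{g ∈ G | E i g ∧ E i' g} ≤ q) :
    ∑ i ∈ J, w i * (p - #{i' ∈ J | i' < i} * q) ≤ ∑ g ∈ G, f g := by
  calc ∑ i ∈ J, w i * (p - #{i' ∈ J | i' < i} * q)
      ≤ ∑ i ∈ J, w i * (#{g ∈ G | E i g}
          - ∑ i' ∈ J with i' < i, (#{g ∈ G | E i g ∧ E i' g} : ℝ)) := by
        refine sum_le_sum fun i hi => mul_le_mul_of_nonneg_left (sub_le_sub (hp i hi) ?_) (hw i hi)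
        rw [← nsmul_eq_mul, ← sum_const]
        exact sum_le_sum fun i' hi' => (mem_filter.mp hi').elim fun hi'J hlt => hq i hi i' hi'J hlt
    _ = ∑ g ∈ G, ∑ i ∈ J, w i * ((if E i g then 1 else 0)
          - ∑ i' ∈ J with i' < i, if E i g ∧ E i' g then 1 else 0) := by
        rw [sum_comm]
        refine sum_congr rfl fun i _ => ?_
        rw [← mul_sum, sum_sub_distrib, sum_comm]
        simp only [natCast_card_filter]
    _ ≤ ∑ g ∈ G, f g := sum_le_sum fun g hg =>
        sum_mul_ite_sub_sum_ite_le J (E · g) w hw (hf g hg) fun i hi => hwf i hi g hg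

end FirstHit

theorem Antitone.mul_sum_range_le_mul_sum_range {e : ℕ → ℝ} (he : Antitone e) {j L : ℕ}
    (hj : 0 < j) (hjL : j ≤ L) : j * ∑ r ∈ range L, e r ≤ L * ∑ r ∈ range j, e r := by
  obtain ⟨d, rfl⟩ := Nat.exists_eq_add_of_le hjL
  have htail : ∑ r ∈ range d, e (j + r) ≤ d * e (j - 1) := by
    simpa using sum_le_sum fun r (_ : r ∈ range d) => he (by omega : j - 1 ≤ j + r)
  have hhead : j * e (j - 1) ≤ ∑ r ∈ range j, e r := by
    simpa using sum_le_sum fun r (hr : r ∈ range j) => he (by simp at hr; omega : r ≤ j - 1)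
  rw [sum_range_add]
  push_cast
  nlinarith [mul_le_mul_of_nonneg_left hhead (Nat.cast_nonneg (α := ℝ) d)]

theorem Antitone.sum_range_succ_mul_le {e : ℕ → ℝ} (he : Antitone e) (L m : ℕ) :
    ∑ r ∈ range ((m + 1) * L), e r ≤ ∑ r ∈ range L, e r + L * ∑ s ∈ Icc 1 m, e (s * L - 1) := by
  induction m with
  | zero => simp
  | succ m ih =>
    have hblock : ∑ r ∈ range L, e ((m + 1) * L + r) ≤ L * e ((m + 1) * L - 1) := by
      simpa using sum_le_sum fun r (_ : r ∈ range L) =>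
        he (by omega : (m + 1) * L - 1 ≤ (m + 1) * L + r)
    rw [add_mul (m + 1), one_mul, sum_range_add, sum_Icc_succ_top (by omega), mul_add]
    linarith

noncomputable def extendByZero {m : ℕ} (f : Fin m → ℝ) (r : ℕ) : ℝ :=
  if hr : r < m then f ⟨r, hr⟩ else 0

section ExtendByZero

variable {m : ℕ} {f : Fin m → ℝ}

@[simp]
theorem extendByZero_val (f : Fin m → ℝ) (j : Fin m) : extendByZero f j = f j := by
  simp [extendByZero]

theorem extendByZero_nonneg (hf : ∀ j, 0 ≤ f j) (r : ℕ) : 0 ≤ extendByZero f r := by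
  unfold extendByZero
  split
  exacts [hf _, le_rfl]

theorem antitone_extendByZero {M : ℕ} (hf : ∀ j, 0 ≤ f j)
    (hmono : ∀ j₁ j₂ : Fin m, j₁ ≤ j₂ → j₂.val < M → f j₂ ≤ f j₁)
    (hsupp : ∀ j : Fin m, M ≤ j.val → f j = 0) : Antitone (extendByZero f) := by
  intro r₁ r₂ hr
  by_cases h₂ : r₂ < m ∧ r₂ < M
  · have h₁ : r₁ < m := hr.trans_lt h₂.1
    simpa [extendByZero, h₁, h₂.1] using hmono ⟨r₁, h₁⟩ ⟨r₂, h₂.1⟩ hr h₂.2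
  · have : extendByZero f r₂ = 0 := by
      unfold extendByZero
      split_ifs with hm
      · exact hsupp _ (not_lt.mp fun hM => h₂ ⟨hm, hM⟩)
      · rfl
    exact this ▸ extendByZero_nonneg hf r₁

theorem sum_filter_val_lt_eq_sum_range {M : ℕ} (hM : M ≤ m) (f : Fin m → ℝ) :
    ∑ j : Fin m with j.val < M, f j = ∑ r ∈ range M, extendByZero f r := by
  rw [sum_filter]
  simp only [← extendByZero_val f]
  rw [Fin.sum_univ_eq_sum_range (fun r => if r < M then extendByZero f r else 0) m,
    ← sum_filter]
  congr 1
  ext r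
  simp only [mem_filter, mem_range]
  omega

end ExtendByZero

theorem exists_nat_near_div {c : ℝ} (hc : 1 < c) {N : ℕ} (hN : 0 < N) :
    ∃ j : ℕ, 0 < j ∧ j ≤ N ∧ ((j : ℝ) - 1) * c ≤ N ∧ (N : ℝ) ≤ j * c := by
  have hc0 : 0 < c := by linarith
  have hNR : (0 : ℝ) < N := by exact_mod_cast hN
  refine ⟨⌊(N : ℝ) / c⌋₊ + 1, Nat.succ_pos _, ?_, ?_, ?_⟩
  · exact (Nat.floor_lt (by positivity)).mpr ((div_lt_iff₀ hc0).mpr (by nlinarith))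
  · push_cast
    simpa using (le_div_iff₀ hc0).mp (Nat.floor_le (by positivity : 0 ≤ (N : ℝ) / c))
  · exact (div_le_iff₀ hc0).mp (by exact_mod_cast (Nat.lt_floor_add_one ((N : ℝ) / c)).le)

/-- Counting form of `ℙ(g i = j) = 1 / N` and `ℙ(g i₁ = j₁, g i₂ = j₂) ≤ C / N²`
(for distinct positions), `g` uniform on `G`. -/
structure IsPairwiseSpread {n N : ℕ} (G : Finset (Fin n → Fin N)) (C : ℝ) : Prop where
  card_filter_eq : ∀ p : Fin n × Fin N, (#{g ∈ G | g p.1 = p.2} : ℝ) = #G / N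
  card_filter_and_le : ∀ p q : Fin n × Fin N, p ≠ q →
    (#{g ∈ G | g p.1 = p.2 ∧ g q.1 = q.2} : ℝ) ≤ C * #G / N ^ 2

theorem IsPairwiseSpread.of_div_card {n N : ℕ} {G : Finset (Fin n → Fin N)} {C : ℝ}
    (hG : G.Nonempty) (h1 : ∀ i : Fin n, ∀ j : Fin N, (#{g ∈ G | g i = j} : ℝ) / #G = 1 / N)
    (h2 : ∀ p q : Fin n × Fin N, p ≠ q →
      (#{g ∈ G | g p.1 = p.2 ∧ g q.1 = q.2} : ℝ) / #G ≤ C / (N : ℝ) ^ 2) :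
    IsPairwiseSpread G C := by
  have hGR : (0 : ℝ) < #G := by exact_mod_cast hG.card_pos
  refine ⟨fun p => ?_, fun p q hpq => ?_⟩
  · have hN : (N : ℝ) ≠ 0 := by exact_mod_cast p.2.pos.ne'
    have := h1 p.1 p.2
    field_simp at this ⊢
    linarith
  · have hN : (0 : ℝ) < N := by exact_mod_cast p.2.pos
    have := h2 p q hpq
    rw [div_le_div_iff₀ hGR (by positivity), ← le_div_iff₀ (by positivity)] at this
    linarith

section Assignments

variable {n N : ℕ} {G : Finset (Fin n → Fin N)} {C : ℝ}

theorem le_kmax_of_hits (g : Fin n → Fin N) (a : Fin n × Fin N → ℝ) {P : Finset (Fin n × Fin N)}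
    {k : ℕ} (hk : 1 ≤ k) (hP : k ≤ #{p ∈ P | g p.1 = p.2}) {b : ℝ} (hb : ∀ p ∈ P, b ≤ a p) :
    b ≤ kmax (fun i => a (i, g i)) k := by
  refine le_kmax hk (s := {p ∈ P | g p.1 = p.2}.image Prod.fst) ?_ ?_
  · rwa [card_image_of_injOn]
    intro p hp p' hp' hrow
    have hp := (mem_filter.mp hp).2
    have hp' := (mem_filter.mp hp').2
    exact Prod.ext hrow (by rw [← hp, ← hp']; exact congrArg g hrow)
  · simp only [mem_image, mem_filter]
    rintro _ ⟨p, ⟨hpP, hhit⟩, rfl⟩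
    simpa [hhit] using hb p hpP

theorem mul_card_le_sum_kmax (hN : 0 < N) (hC : 0 ≤ C)
    (hG : IsPairwiseSpread G C)
    {a : Fin n × Fin N → ℝ} (ha : ∀ p, 0 ≤ a p) {P : Finset (Fin n × Fin N)} {s : ℕ}
    (hs : 1 ≤ s) (hP : #P = s * (2 * N)) {b : ℝ} (hb0 : 0 ≤ b) (hb : ∀ p ∈ P, b ≤ a p) :
    b * #G ≤ (2 + 4 * C) * ∑ g ∈ G, kmax (fun i => a (i, g i)) s := by
  set X : (Fin n → Fin N) → ℝ := fun g => #{p ∈ P | g p.1 = p.2}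
  have hNR : (0 : ℝ) < N := by exact_mod_cast hN
  have hsR : (1 : ℝ) ≤ s := by exact_mod_cast hs
  have hPR : (#P : ℝ) = 2 * s * N := by rw [hP]; push_cast; ring
  have hmean : 2 * s * #G ≤ ∑ g ∈ G, X g := by
    have hswap : ∑ g ∈ G, X g = ∑ p ∈ P, (#{g ∈ G | g p.1 = p.2} : ℝ) := by
      simp only [X, ← Nat.cast_sum]
      exact congrArg _ (sum_card_bipartiteAbove_eq_sum_card_bipartiteBelow _)
    rw [hswap, sum_congr rfl fun p _ => hG.card_filter_eq p, sum_const, nsmul_eq_mul, hPR]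
    field_simp
    rfl
  have hvar : ∑ g ∈ G, X g ^ 2 ≤ (2 * s + 4 * C * s ^ 2) * #G := by
    refine (sum_card_filter_sq_le G P (fun p g => g p.1 = p.2) (by positivity)
      (fun p _ => (hG.card_filter_eq p).le) fun p _ q _ hpq => hG.card_filter_and_le p q hpq).trans
      (le_of_eq ?_)
    rw [hPR]
    field_simp
    ring
  have hPZ := paley_zygmund_card_filter G X (t := s) (by positivity) (by positivity)
    (by linarith) hmean hvar
  have hconst : 1 / (2 + 4 * C) ≤ (2 * s - s) ^ 2 / (2 * s + 4 * C * s ^ 2) := by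
    rw [div_le_div_iff₀ (by positivity) (by positivity)]
    nlinarith
  have hhits : ∀ g ∈ {g ∈ G | (s : ℝ) ≤ X g}, b ≤ kmax (fun i => a (i, g i)) s := fun g hg =>
    le_kmax_of_hits g a hs (Nat.cast_le.mp (mem_filter.mp hg).2) hb
  calc b * #G = (2 + 4 * C) * (b * (1 / (2 + 4 * C) * #G)) := by field_simp
    _ ≤ (2 + 4 * C) * (b * ((2 * s - s) ^ 2 / (2 * s + 4 * C * s ^ 2) * #G)) := by gcongr
    _ ≤ (2 + 4 * C) * (b * #{g ∈ G | (s : ℝ) ≤ X g}) := by gcongr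
    _ ≤ (2 + 4 * C) * ∑ g ∈ G, kmax (fun i => a (i, g i)) s := by
        gcongr
        calc b * #{g ∈ G | (s : ℝ) ≤ X g} = ∑ g ∈ G with (s : ℝ) ≤ X g, b := by
              rw [sum_const, nsmul_eq_mul, mul_comm]
          _ ≤ ∑ g ∈ G with (s : ℝ) ≤ X g, kmax (fun i => a (i, g i)) s := sum_le_sum hhits
          _ ≤ _ := sum_le_sum_of_subset_of_nonneg (filter_subset _ _)
                fun g _ _ => kmax_nonneg (fun i => ha _) s

theorem sum_mul_card_le_sum_kmax_one (hN : 0 < N) (hC : 0 ≤ C)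
    (hG : IsPairwiseSpread G C)
    {m : ℕ} (pos : Fin m ↪ Fin n × Fin N) {a : Fin n × Fin N → ℝ} (ha : ∀ p, 0 ≤ a p)
    {j₀ : ℕ} (hj₀ : ((j₀ : ℝ) - 1) * (2 * C) ≤ N) :
    (∑ j : Fin m with j.val < j₀, a (pos j)) * #G
      ≤ 2 * N * ∑ g ∈ G, kmax (fun i => a (i, g i)) 1 := by
  set J : Finset (Fin m) := {j | j.val < j₀}
  have hNR : (0 : ℝ) < N := by exact_mod_cast hN
  have hfirst := sum_mul_sub_card_mul_le_sum G J (fun j g => g (pos j).1 = (pos j).2)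
    (fun j => a (pos j)) (fun g => kmax (fun i => a (i, g i)) 1) (p := #G / N)
    (q := C * #G / N ^ 2) (fun j _ => ha _) (fun g _ => kmax_nonneg (fun i => ha _) 1)
    (fun j _ g _ hhit => le_kmax le_rfl (s := {(pos j).1}) (by simp) (by simp [hhit]))
    (fun j _ => (hG.card_filter_eq (pos j)).ge)
    (fun j _ j' _ hlt => hG.card_filter_and_le _ _ (pos.injective.ne hlt.ne'))
  have hfactor : ∀ j ∈ J,
      (#G : ℝ) / (2 * N) ≤ #G / N - #{j' ∈ J | j' < j} * (C * #G / N ^ 2) := by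
    intro j hj
    have hcard : (#{j' ∈ J | j' < j} : ℝ) ≤ j₀ - 1 := by
      have h₁ : #{j' ∈ J | j' < j} ≤ j.val :=
        (card_le_card fun j' hj' => mem_Iio.mpr (mem_filter.mp hj').2).trans (Fin.card_Iio j).le
      have h₂ : j.val < j₀ := (mem_filter.mp hj).2
      rw [le_sub_iff_add_le]
      exact_mod_cast (by omega : #{j' ∈ J | j' < j} + 1 ≤ j₀)
    have hsmall : (#{j' ∈ J | j' < j} : ℝ) * (C * #G / N ^ 2) ≤ (#G : ℝ) / (2 * N) :=
      calc (#{j' ∈ J | j' < j} : ℝ) * (C * #G / N ^ 2)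
          = (#{j' ∈ J | j' < j} * (2 * C)) * ((#G : ℝ) / (2 * N ^ 2)) := by ring
        _ ≤ N * ((#G : ℝ) / (2 * N ^ 2)) := by gcongr; nlinarith
        _ = (#G : ℝ) / (2 * N) := by field_simp
    have : (#G : ℝ) / N = #G / (2 * N) + #G / (2 * N) := by field_simp; ring
    linarith
  calc (∑ j ∈ J, a (pos j)) * #G = 2 * N * ∑ j ∈ J, a (pos j) * (#G / (2 * N)) := by
        rw [← sum_mul]
        field_simp
    _ ≤ 2 * N * ∑ j ∈ J, a (pos j) * (#G / N - #{j' ∈ J | j' < j} * (C * #G / N ^ 2)) := by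
        gcongr with j hj
        · exact ha _
        · exact hfactor j hj
    _ ≤ _ := by gcongr

theorem sum_range_two_mul_mul_card_le_sum_kmax_one (hN : 0 < N) (hC : 1 ≤ C) (hn : 0 < n)
    (hG : IsPairwiseSpread G C) (h : Fin (n * N) ≃ Fin n × Fin N) {a : Fin n × Fin N → ℝ}
    (ha : ∀ p, 0 ≤ a p) (he : Antitone (extendByZero (a ∘ h))) :
    (∑ r ∈ range (2 * N), extendByZero (a ∘ h) r) * #G
      ≤ 8 * C * N * ∑ g ∈ G, kmax (fun i => a (i, g i)) 1 := by
  set e := extendByZero (a ∘ h)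
  set K₁ := ∑ g ∈ G, kmax (fun i => a (i, g i)) 1
  have hK₁ : 0 ≤ K₁ := sum_nonneg fun g _ => kmax_nonneg (fun i => ha _) 1
  obtain ⟨j₀, hj₀, hj₀N, hj₀C, hNj₀⟩ := exists_nat_near_div (by linarith : 1 < 2 * C) hN
  have hhead : (∑ r ∈ range j₀, e r) * #G ≤ 2 * N * K₁ := by
    have hsum : ∑ j : Fin (n * N) with j.val < j₀, a (h j) = ∑ r ∈ range j₀, e r :=
      sum_filter_val_lt_eq_sum_range (hj₀N.trans (Nat.le_mul_of_pos_left N hn)) (a ∘ h)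
    simpa [hsum] using sum_mul_card_le_sum_kmax_one hN (by linarith) hG h.toEmbedding ha hj₀C
  have hmean := he.mul_sum_range_le_mul_sum_range hj₀ (by omega : j₀ ≤ 2 * N)
  push_cast at hmean
  refine le_of_mul_le_mul_left ?_ (by exact_mod_cast hj₀ : (0 : ℝ) < j₀)
  calc (j₀ : ℝ) * ((∑ r ∈ range (2 * N), e r) * #G)
      ≤ 2 * N * ((∑ r ∈ range j₀, e r) * #G) := by nlinarith [(Nat.cast_nonneg (α := ℝ) #G)]
    _ ≤ 2 * N * (2 * N * K₁) := by gcongr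
    _ ≤ 2 * (j₀ * (2 * C)) * (2 * N * K₁) :=
        mul_le_mul_of_nonneg_right (by linarith) (mul_nonneg (by positivity) hK₁)
    _ = j₀ * (8 * C * N * K₁) := by ring

theorem extendByZero_mul_card_le_sum_kmax (hN : 0 < N) (hC : 0 ≤ C) (hG : IsPairwiseSpread G C)
    (h : Fin (n * N) ≃ Fin n × Fin N) {a : Fin n × Fin N → ℝ} (ha : ∀ p, 0 ≤ a p)
    (he : Antitone (extendByZero (a ∘ h))) {s : ℕ} (hs : 1 ≤ s) (hsn : 2 * s ≤ n) :
    extendByZero (a ∘ h) (s * (2 * N) - 1) * #G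
      ≤ (2 + 4 * C) * ∑ g ∈ G, kmax (fun i => a (i, g i)) s := by
  refine mul_card_le_sum_kmax hN hC hG ha
    (P := ({j | j.val < s * (2 * N)} : Finset (Fin (n * N))).map h.toEmbedding) hs ?_
    (extendByZero_nonneg (fun j => ha _) _) ?_
  · rw [card_map, Fin.card_filter_val_lt, min_eq_right (by nlinarith)]
  · simp only [mem_map, mem_filter, mem_univ, true_and, Equiv.coe_toEmbedding]
    rintro _ ⟨j, hj, rfl⟩
    simpa using he (Nat.le_sub_one_of_lt hj : j.val ≤ s * (2 * N) - 1)

theorem sum_range_mul_card_le_sum_sum_kmax (hN : 0 < N) (hC : 1 ≤ C) {ℓ : ℕ} (hℓ1 : 1 ≤ ℓ)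
    (hℓ : ℓ ≤ n) (hG : IsPairwiseSpread G C)
    (h : Fin (n * N) ≃ Fin n × Fin N) {a : Fin n × Fin N → ℝ} (ha : ∀ p, 0 ≤ a p)
    (he : Antitone (extendByZero (a ∘ h))) :
    (∑ r ∈ range (ℓ * N), extendByZero (a ∘ h) r) * #G
      ≤ (4 + 16 * C) * N * ∑ g ∈ G, ∑ k ∈ range ℓ, kmax (fun i => a (i, g i)) (k + 1) := by
  set e := extendByZero (a ∘ h)
  set K : ℕ → ℝ := fun k => ∑ g ∈ G, kmax (fun i => a (i, g i)) k
  have he0 : ∀ r, 0 ≤ e r := extendByZero_nonneg fun j => ha _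
  have hK0 : ∀ k, 0 ≤ K k := fun k => sum_nonneg fun g _ => kmax_nonneg (fun i => ha _) k
  have hSR : ∑ g ∈ G, ∑ k ∈ range ℓ, kmax (fun i => a (i, g i)) (k + 1)
      = ∑ s ∈ Icc 1 ℓ, K s := by
    rw [sum_comm, ← Ico_add_one_right_eq_Icc, sum_Ico_eq_sum_range, Nat.add_sub_cancel]
    exact sum_congr rfl fun k _ => by rw [add_comm]
  have hK1 : K 1 ≤ ∑ s ∈ Icc 1 ℓ, K s :=
    single_le_sum (fun s _ => hK0 s) (mem_Icc.mpr ⟨le_rfl, hℓ1⟩)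
  have hKs : ∑ s ∈ Icc 1 (ℓ / 2), K s ≤ ∑ s ∈ Icc 1 ℓ, K s :=
    sum_le_sum_of_subset_of_nonneg (Icc_subset_Icc_right (Nat.div_le_self ℓ 2)) fun s _ _ => hK0 s
  have hblock : ∀ s ∈ Icc 1 (ℓ / 2), e (s * (2 * N) - 1) * #G ≤ (2 + 4 * C) * K s :=
    fun s hs => extendByZero_mul_card_le_sum_kmax hN (by linarith) hG h ha he
      (mem_Icc.mp hs).1 (by have := (mem_Icc.mp hs).2; omega)
  have hT : ∑ r ∈ range (ℓ * N), e r
      ≤ ∑ r ∈ range (2 * N), e r + 2 * N * ∑ s ∈ Icc 1 (ℓ / 2), e (s * (2 * N) - 1) := by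
    have hℓN : ℓ * N ≤ (ℓ / 2 + 1) * (2 * N) := by nlinarith [Nat.lt_div_mul_add (a := ℓ) two_pos]
    refine (sum_le_sum_of_subset_of_nonneg (range_subset_range.mpr hℓN) fun r _ _ => he0 r).trans ?_
    exact_mod_cast he.sum_range_succ_mul_le (2 * N) (ℓ / 2)
  rw [hSR]
  calc (∑ r ∈ range (ℓ * N), e r) * #G
      ≤ (∑ r ∈ range (2 * N), e r + 2 * N * ∑ s ∈ Icc 1 (ℓ / 2), e (s * (2 * N) - 1)) * #G := by
        gcongr
    _ = (∑ r ∈ range (2 * N), e r) * #G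
          + 2 * N * ∑ s ∈ Icc 1 (ℓ / 2), e (s * (2 * N) - 1) * #G := by
        rw [add_mul, mul_assoc, sum_mul (Icc 1 (ℓ / 2))]
    _ ≤ 8 * C * N * K 1 + 2 * N * ∑ s ∈ Icc 1 (ℓ / 2), (2 + 4 * C) * K s :=
        add_le_add (sum_range_two_mul_mul_card_le_sum_kmax_one hN hC (by omega) hG h ha he)
          (mul_le_mul_of_nonneg_left (sum_le_sum hblock) (by positivity))
    _ ≤ (4 + 16 * C) * N * ∑ s ∈ Icc 1 ℓ, K s := by
        rw [← mul_sum]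
        nlinarith [mul_le_mul_of_nonneg_left hK1 (by positivity : (0 : ℝ) ≤ 8 * C * N),
          mul_le_mul_of_nonneg_left hKs (by positivity : (0 : ℝ) ≤ 2 * N * (2 + 4 * C))]

end Assignments

/-- Lemma 3.5: reduction to averaged (flat) matrices. If `a` is non-negative,
supported on the positions `h(1),…,h(ℓN)` and decreasing along `h`, and `ã` is
the matrix with all these entries replaced by their average, then
`E S(ã) ≤ (8 + 16 C_G) E S(a)` where `S(b)(g) = ∑_{k=1}^ℓ kmax b_{i g(i)}`. -/
theorem stmt15 (n N ℓ : ℕ) (hℓ1 : 1 ≤ ℓ) (hℓ : ℓ ≤ n) (hN : 1 ≤ N)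
    (G : Finset (Fin n → Fin N)) (hG : G.Nonempty)
    (C : ℝ) (hC : 1 ≤ C)
    (h1 : ∀ i : Fin n, ∀ j : Fin N,
      ((G.filter fun g => g i = j).card : ℝ) / G.card = 1 / N)
    (h2 : ∀ p q : Fin n × Fin N, p ≠ q →
      ((G.filter fun g => g p.1 = p.2 ∧ g q.1 = q.2).card : ℝ) / G.card
        ≤ C / (N : ℝ) ^ 2)
    (h : Fin (n * N) ≃ Fin n × Fin N)
    (a : Fin n × Fin N → ℝ)
    (hpos : ∀ p, 0 ≤ a p)
    (hmono : ∀ j₁ j₂ : Fin (n * N), j₁ ≤ j₂ → j₂.val < ℓ * N → a (h j₂) ≤ a (h j₁))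
    (hsupp : ∀ j : Fin (n * N), ℓ * N ≤ j.val → a (h j) = 0)
    (atil : Fin n × Fin N → ℝ)
    (hatil : ∀ p, atil p =
      if (h.symm p).val < ℓ * N then
        (∑ j ∈ Finset.univ.filter (fun j : Fin (n * N) => j.val < ℓ * N), a (h j))
          / ((ℓ : ℝ) * N)
      else 0) :
    (∑ g ∈ G, ∑ k ∈ Finset.range ℓ, kmax (fun i => atil (i, g i)) (k + 1)) / G.card
      ≤ (8 + 16 * C) *
        ((∑ g ∈ G, ∑ k ∈ Finset.range ℓ, kmax (fun i => a (i, g i)) (k + 1)) / G.card) := by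
  have hGR : (0 : ℝ) < #G := by exact_mod_cast hG.card_pos
  have hNR : (0 : ℝ) < N := by exact_mod_cast hN
  set T := ∑ j : Fin (n * N) with j.val < ℓ * N, a (h j)
  have hA : 0 ≤ T / (ℓ * N) := div_nonneg (sum_nonneg fun j _ => hpos _) (by positivity)
  have hflat : ∑ g ∈ G, ∑ k ∈ range ℓ, kmax (fun i => atil (i, g i)) (k + 1)
      ≤ ∑ _g ∈ G, ∑ _k ∈ range ℓ, T / (ℓ * N) :=
    sum_le_sum fun g _ => sum_le_sum fun k _ => kmax_le hA (fun i => by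
      rw [hatil]; split_ifs; exacts [le_rfl, hA]) _
  have hlow := sum_range_mul_card_le_sum_sum_kmax (by omega) hC hℓ1 hℓ
    (.of_div_card hG h1 h2) h hpos (antitone_extendByZero (fun j => hpos (h j)) hmono hsupp)
  have hT : T = ∑ r ∈ range (ℓ * N), extendByZero (a ∘ h) r :=
    sum_filter_val_lt_eq_sum_range (Nat.mul_le_mul_right N hℓ) (a ∘ h)
  rw [← hT] at hlow
  rw [mul_div_assoc', div_le_div_iff_of_pos_right hGR]
  calc _ ≤ ∑ _g ∈ G, ∑ _k ∈ range ℓ, T / (ℓ * N) := hflat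
    _ = T * #G / N := by simp only [sum_const, card_range, nsmul_eq_mul]; field_simp
    _ ≤ _ := by
      rw [div_le_iff₀ hNR]
      nlinarith [sum_nonneg fun g (_ : g ∈ G) => sum_nonneg fun k (_ : k ∈ range ℓ) =>
        kmax_nonneg (fun i => hpos (i, g i)) (k + 1)]
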